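/- In the centipede game with 2n decision nodes (n ≥ 1), the subgame perfect behavioral profile is unique: every subgame perfect behavioral profile p satisfies p t = 1 for all t (stop with probability 1 at every decision node). In particular, any profile that assigns the active player a best response in every subgame must be this stop-everywhere profile. -/
import Mathlib


/-- Payoff to player 1 if the game is stopped at node `t`
(player 1 is active at even `t`, player 2 at odd `t`). -/
noncomputable def stopPay1 (t : ℕ) : ℝ := if t % 2 = 0 then t + 2 else t

/-- Payoff to player 2 if the game is stopped at node `t`. -/
noncomputable def stopPay2 (t : ℕ) : ℝ := if t % 2 = 0 then t + 1 else t + 3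

/-- Backward recursion auxiliary: `Vaux n p k` is the pair of continuation
values of players 1 and 2 at node `2n - k`. -/
noncomputable def Vaux (n : ℕ) (p : ℕ → ℝ) : ℕ → ℝ × ℝ
  | 0 => (2 * n + 2, 2 * n + 1)
  | k + 1 =>
      (p (2 * n - (k + 1)) * stopPay1 (2 * n - (k + 1)) +
          (1 - p (2 * n - (k + 1))) * (Vaux n p k).1,
       p (2 * n - (k + 1)) * stopPay2 (2 * n - (k + 1)) +
          (1 - p (2 * n - (k + 1))) * (Vaux n p k).2)

/-- Continuation value of player 1 at node `t` (for `t ≤ 2n`). -/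
noncomputable def V1 (n : ℕ) (p : ℕ → ℝ) (t : ℕ) : ℝ := (Vaux n p (2 * n - t)).1

/-- Continuation value of player 2 at node `t` (for `t ≤ 2n`). -/
noncomputable def V2 (n : ℕ) (p : ℕ → ℝ) (t : ℕ) : ℝ := (Vaux n p (2 * n - t)).2

/-- Stop payoff of the active player at node `t`. -/
noncomputable def stopA (t : ℕ) : ℝ := if t % 2 = 0 then stopPay1 t else stopPay2 t

/-- Continuation value (at node `t + 1`) of the player who is active at node `t`. -/
noncomputable def contA (n : ℕ) (p : ℕ → ℝ) (t : ℕ) : ℝ :=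
  if t % 2 = 0 then V1 n p (t + 1) else V2 n p (t + 1)

/-- A behavioral profile: `p t` is the probability of stopping at node `t`. -/
def IsBehavioral (n : ℕ) (p : ℕ → ℝ) : Prop :=
  ∀ t < 2 * n, 0 ≤ p t ∧ p t ≤ 1

/-- `p` is subgame perfect: at every node the prescribed stop probability
maximizes the active player's continuation value. -/
def SubgamePerfect (n : ℕ) (p : ℕ → ℝ) : Prop :=
  IsBehavioral n p ∧
    ∀ t < 2 * n, ∀ q : ℝ, 0 ≤ q → q ≤ 1 →
      q * stopA t + (1 - q) * contA n p t ≤ p t * stopA t + (1 - p t) * contA n p t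

lemma V1_rec (n : ℕ) (p : ℕ → ℝ) (t : ℕ) (ht : t < 2 * n) :
    V1 n p t = p t * stopPay1 t + (1 - p t) * V1 n p (t + 1) := by
  have hk : 2 * n - t = (2 * n - (t + 1)) + 1 := by omega
  have ht' : 2 * n - ((2 * n - (t + 1)) + 1) = t := by omega
  unfold V1
  rw [hk]
  simp only [Vaux, ht']

lemma V2_rec (n : ℕ) (p : ℕ → ℝ) (t : ℕ) (ht : t < 2 * n) :
    V2 n p t = p t * stopPay2 t + (1 - p t) * V2 n p (t + 1) := by
  have hk : 2 * n - t = (2 * n - (t + 1)) + 1 := by omega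
  have ht' : 2 * n - ((2 * n - (t + 1)) + 1) = t := by omega
  unfold V2
  rw [hk]
  simp only [Vaux, ht']

lemma V1_eq_stop (n : ℕ) (p : ℕ → ℝ) (t : ℕ) (ht : t < 2 * n) (hpt : p t = 1) :
    V1 n p t = stopPay1 t := by
  rw [V1_rec n p t ht, hpt]; ring

lemma V2_eq_stop (n : ℕ) (p : ℕ → ℝ) (t : ℕ) (ht : t < 2 * n) (hpt : p t = 1) :
    V2 n p t = stopPay2 t := by
  rw [V2_rec n p t ht, hpt]; ring

/-- In the centipede game with `2n` decision nodes (`n ≥ 1`),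
the subgame perfect behavioral profile is unique: every subgame perfect
profile stops with probability 1 at every decision node. -/
theorem subgame_perfect_unique (n : ℕ) (hn : 1 ≤ n) (p : ℕ → ℝ)
    (h : SubgamePerfect n p) : ∀ t < 2 * n, p t = 1 := by
  obtain ⟨hb, hspe⟩ := h
  suffices H : ∀ k t, t < 2 * n → 2 * n - t = k → p t = 1 by
    intro t ht; exact H _ t ht rfl
  intro k
  induction k using Nat.strong_induction_on with
  | _ k ih =>
    intro t ht hk
    have hC : contA n p t + 1 = stopA t := by
      rcases Nat.lt_or_ge (t + 1) (2 * n) with h1 | h1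
      · have hp1 : p (t + 1) = 1 := ih (2 * n - (t + 1)) (by omega) (t + 1) h1 rfl
        rcases Nat.even_or_odd t with he | ho
        · have hmod : t % 2 = 0 := Nat.even_iff.mp he
          have hmod1 : (t + 1) % 2 = 1 := by omega
          rw [contA, stopA, if_pos hmod, if_pos hmod,
            V1_eq_stop n p (t + 1) h1 hp1]
          simp only [stopPay1, hmod, hmod1, if_pos rfl]
          norm_num
          push_cast
          ring
        · have hmod : t % 2 = 1 := Nat.odd_iff.mp ho
          have hmod1 : (t + 1) % 2 = 0 := by omega
          rw [contA, stopA, if_neg (by omega), if_neg (by omega),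
            V2_eq_stop n p (t + 1) h1 hp1]
          simp only [stopPay2, hmod, hmod1, if_pos rfl]
          norm_num
          push_cast
          ring
      · have ht2 : t + 1 = 2 * n := by omega
        have hmod : t % 2 = 1 := by omega
        rw [contA, stopA, if_neg (by omega), if_neg (by omega), ht2]
        have hV : V2 n p (2 * n) = 2 * n + 1 := by
          simp [V2, Vaux, Nat.sub_self]
        rw [hV]
        have hcast : (t : ℝ) + 1 = 2 * n := by exact_mod_cast congrArg (Nat.cast : ℕ → ℝ) ht2
        simp only [stopPay2, hmod]
        norm_num
        linarith
    have hS := hspe t ht 1 zero_le_one le_rfl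
    have hbt := hb t ht
    nlinarith [hS, hbt.1, hbt.2, hC]
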